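/- Let γ ∈ (0,1), m, n ≥ 1, and let constants δ > 0, C > 0 and a₁ ∈ (0,1] be given. Let b ∈ ℝ^m with |b| ≤ C, let σ ∈ ℝ^{m×n} with σσ' ≥ δ·I_m and |σ| ≤ C, and let Θ ⊆ ℝ^m × [0,∞) be a set containing (0,0). For Y ∈ ℝ and Z ∈ ℝⁿ define F(Y,Z) = γ · sup_{(π,c) ∈ Θ} [ −((1−γ)/2)·π'σσ'π + π'(b + σZ) + (c^γ/γ)·e^{−Y} − c ]. Then: (i) for every fixed Z ∈ ℝⁿ, the map Y ↦ F(Y,Z) is non-increasing on ℝ; and (ii) there exists a constant K > 0, depending only on (δ, γ, C, a₁, m, n), such that |F(Y,Z) − F(Y,Z̃)| ≤ K·(1 + |Z| + |Z̃|)·|Z − Z̃| for all Z, Z̃ ∈ ℝⁿ and all Y ≥ ln a₁. -/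

import Mathlib

/-
The objective under the supremum is `-α|π|² + O(|π|(1 + |Z|)) + G(Y)` with `α = (1-γ)δ/2 > 0`
by uniform ellipticity, Cauchy–Schwarz, and Young's inequality `c^γ e/γ - c ≤ (1-γ)/γ e^{1/(1-γ)}`;
so the supremum is finite, and it is at least `0` thanks to `(0,0) ∈ Θ`. Monotonicity in `Y` holds
pointwise in `(π,c)` since `c^γ ≥ 0`. For the Lipschitz estimate only points with positive objective
matter, and there the quadratic decay forces `|π| ≤ R(1 + |Z|)` with `R` uniform in `Y ≥ ln a₁`;
as the objective depends on `Z` only through `π'σZ`, the two suprema differ by at most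
`C R (1 + |Z|) |Z - Z̃|`.
-/

open Matrix

/-- The generator of the transformed power-utility BSDE system with coupled
constraint set `Θ`:
`F(Y,Z) = γ · sup_{(π,c) ∈ Θ} [ -((1-γ)/2) π'σσ'π + π'(b + σZ) + (c^γ/γ) e^{-Y} - c ]`. -/
noncomputable def powGen (m n : ℕ) (γ : ℝ) (b : Fin m → ℝ)
    (σ : Matrix (Fin m) (Fin n) ℝ) (Θ : Set ((Fin m → ℝ) × ℝ))
    (Y : ℝ) (Z : Fin n → ℝ) : ℝ :=
  γ * sSup {y : ℝ | ∃ p ∈ Θ,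
    y = -((1 - γ) / 2) * (p.1 ⬝ᵥ ((σ * σᵀ) *ᵥ p.1)) + p.1 ⬝ᵥ (b + σ *ᵥ Z)
      + (p.2 ^ γ / γ) * Real.exp (-Y) - p.2}

open Finset

theorem dotProduct_le_sqrt_mul_sqrt {ι : Type*} [Fintype ι] (u v : ι → ℝ) :
    u ⬝ᵥ v ≤ √(∑ i, u i ^ 2) * √(∑ i, v i ^ 2) :=
  Real.sum_mul_le_sqrt_mul_sqrt _ _ _

theorem sqrt_sum_mulVec_sq_le {ι κ : Type*} [Fintype ι] [Fintype κ] (σ : Matrix ι κ ℝ)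
    (v : κ → ℝ) : √(∑ i, (σ *ᵥ v) i ^ 2) ≤ √(∑ i, ∑ j, σ i j ^ 2) * √(∑ j, v j ^ 2) := by
  rw [← Real.sqrt_mul (by positivity), sum_mul]
  gcongr with i
  simpa [mulVec, dotProduct] using sum_mul_sq_le_sq_mul_sq univ (σ i) v

theorem dotProduct_mulVec_le {ι κ : Type*} [Fintype ι] [Fintype κ] {C : ℝ}
    {σ : Matrix ι κ ℝ} (hσ : √(∑ i, ∑ j, σ i j ^ 2) ≤ C) (u : ι → ℝ) (v : κ → ℝ) :
    u ⬝ᵥ (σ *ᵥ v) ≤ √(∑ i, u i ^ 2) * (C * √(∑ j, v j ^ 2)) :=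
  calc u ⬝ᵥ (σ *ᵥ v) ≤ √(∑ i, u i ^ 2) * √(∑ i, (σ *ᵥ v) i ^ 2) :=
        dotProduct_le_sqrt_mul_sqrt _ _
    _ ≤ √(∑ i, u i ^ 2) * (√(∑ i, ∑ j, σ i j ^ 2) * √(∑ j, v j ^ 2)) := by
        gcongr; exact sqrt_sum_mulVec_sq_le σ v
    _ ≤ √(∑ i, u i ^ 2) * (C * √(∑ j, v j ^ 2)) := by gcongr

theorem Matrix.PosSemidef.mul_sum_sq_le_dotProduct_mulVec {ι : Type*} [Fintype ι]
    [DecidableEq ι] {A : Matrix ι ι ℝ} {δ : ℝ} (hA : (A - δ • (1 : Matrix ι ι ℝ)).PosSemidef)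
    (x : ι → ℝ) : δ * ∑ i, x i ^ 2 ≤ x ⬝ᵥ (A *ᵥ x) := by
  have h := hA.dotProduct_mulVec_nonneg x
  rw [star_trivial, sub_mulVec, dotProduct_sub, smul_mulVec, one_mulVec, dotProduct_smul,
    smul_eq_mul] at h
  have hx : x ⬝ᵥ x = ∑ i, x i ^ 2 := by simp only [dotProduct, sq]
  rw [hx] at h
  linarith

theorem rpow_div_mul_sub_le {γ c e : ℝ} (hγ : γ ∈ Set.Ioo (0 : ℝ) 1) (hc : 0 ≤ c) (he : 0 ≤ e) :
    c ^ γ / γ * e - c ≤ (1 - γ) / γ * e ^ (1 / (1 - γ)) := by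
  obtain ⟨hγ0, hγ1⟩ := hγ
  have h1γ : 0 < 1 - γ := by linarith
  have hE : (e ^ (1 / (1 - γ))) ^ (1 - γ) = e := by
    rw [← Real.rpow_mul he, one_div, inv_mul_cancel₀ h1γ.ne', Real.rpow_one]
  have amgm := Real.geom_mean_le_arith_mean2_weighted hγ0.le h1γ.le hc
    (Real.rpow_nonneg he (1 / (1 - γ))) (add_sub_cancel γ 1)
  rw [hE] at amgm
  rw [div_mul_eq_mul_div, div_mul_eq_mul_div, div_sub' hγ0.ne',
    div_le_div_iff_of_pos_right hγ0]
  linarith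

theorem neg_mul_sq_add_mul_le {α N t : ℝ} (hα : 0 < α) : -α * t ^ 2 + t * N ≤ N ^ 2 / (4 * α) := by
  rw [le_div_iff₀ (by positivity)]
  nlinarith [sq_nonneg (N - 2 * α * t)]

theorem le_one_add_div_of_mul_sq_lt {α N G t : ℝ} (hα : 0 < α) (hN : 0 ≤ N) (hG : 0 ≤ G)
    (h : α * t ^ 2 < t * N + G) : t ≤ 1 + (N + G) / α := by
  have hNG : 0 ≤ (N + G) / α := by positivity
  rcases le_or_gt t 1 with ht | ht
  · linarith
  · have : t < (N + G) / α := by rw [lt_div_iff₀ hα]; nlinarith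
    linarith

theorem csSup_image_le_csSup_image_add {α : Type*} {s : Set α} {f g : α → ℝ} {ε : ℝ}
    (hs : s.Nonempty) (hg : BddAbove (g '' s)) (h0 : 0 ≤ sSup (g '' s) + ε)
    (h : ∀ a ∈ s, 0 < f a → f a ≤ g a + ε) : sSup (f '' s) ≤ sSup (g '' s) + ε := by
  refine csSup_le (hs.image f) ?_
  rintro _ ⟨a, ha, rfl⟩
  rcases lt_or_ge 0 (f a) with hfa | hfa
  · exact (h a ha hfa).trans (by gcongr; exact le_csSup hg (Set.mem_image_of_mem g ha))
  · linarith

section PowGen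

variable {m n : ℕ} {γ δ C : ℝ} {b : Fin m → ℝ} {σ : Matrix (Fin m) (Fin n) ℝ}
  {Θ : Set ((Fin m → ℝ) × ℝ)}

noncomputable def powGenObjective (γ : ℝ) (b : Fin m → ℝ) (σ : Matrix (Fin m) (Fin n) ℝ)
    (Y : ℝ) (Z : Fin n → ℝ) (p : (Fin m → ℝ) × ℝ) : ℝ :=
  -((1 - γ) / 2) * (p.1 ⬝ᵥ ((σ * σᵀ) *ᵥ p.1)) + p.1 ⬝ᵥ (b + σ *ᵥ Z)
    + (p.2 ^ γ / γ) * Real.exp (-Y) - p.2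

theorem powGen_eq (Θ : Set ((Fin m → ℝ) × ℝ)) (Y : ℝ) (Z : Fin n → ℝ) :
    powGen m n γ b σ Θ Y Z = γ * sSup (powGenObjective γ b σ Y Z '' Θ) := by
  simp only [powGen, powGenObjective, Set.image, eq_comm]

theorem powGenObjective_zero (hγ : γ ≠ 0) (Y : ℝ) (Z : Fin n → ℝ) :
    powGenObjective γ b σ Y Z (0, 0) = 0 := by
  simp [powGenObjective, Real.zero_rpow hγ]

theorem powGenObjective_antitone (hγ : 0 < γ) {p : (Fin m → ℝ) × ℝ} (hp : 0 ≤ p.2)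
    (Z : Fin n → ℝ) : Antitone fun Y => powGenObjective γ b σ Y Z p := by
  intro Y₁ Y₂ hY
  have hc : 0 ≤ p.2 ^ γ / γ := div_nonneg (Real.rpow_nonneg hp γ) hγ.le
  have := mul_le_mul_of_nonneg_left (Real.exp_le_exp.2 (neg_le_neg hY)) hc
  simp only [powGenObjective]
  linarith

theorem powGenObjective_sub (Y : ℝ) (Z Zt : Fin n → ℝ) (p : (Fin m → ℝ) × ℝ) :
    powGenObjective γ b σ Y Z p - powGenObjective γ b σ Y Zt p = p.1 ⬝ᵥ (σ *ᵥ (Z - Zt)) := by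
  simp only [powGenObjective, mulVec_sub, dotProduct_sub, dotProduct_add]
  ring

theorem powGenObjective_le (hγ : γ ∈ Set.Ioo (0 : ℝ) 1) (hb : √(∑ i, b i ^ 2) ≤ C)
    (hσ : (σ * σᵀ - δ • (1 : Matrix (Fin m) (Fin m) ℝ)).PosSemidef)
    (hσC : √(∑ i, ∑ j, σ i j ^ 2) ≤ C) {p : (Fin m → ℝ) × ℝ} (hp : 0 ≤ p.2)
    (Y : ℝ) (Z : Fin n → ℝ) :
    powGenObjective γ b σ Y Z p ≤ -((1 - γ) * δ / 2) * √(∑ i, p.1 i ^ 2) ^ 2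
      + √(∑ i, p.1 i ^ 2) * (C * (1 + √(∑ j, Z j ^ 2)))
      + (1 - γ) / γ * Real.exp (-Y) ^ (1 / (1 - γ)) := by
  have h1γ : 0 ≤ 1 - γ := by linarith [hγ.2]
  have hquad := mul_le_mul_of_nonneg_left (hσ.mul_sum_sq_le_dotProduct_mulVec p.1)
    (div_nonneg h1γ zero_le_two)
  have hdrift : p.1 ⬝ᵥ b ≤ √(∑ i, p.1 i ^ 2) * C :=
    (dotProduct_le_sqrt_mul_sqrt _ _).trans (by gcongr)
  have hvol := dotProduct_mulVec_le hσC p.1 Z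
  have hcons := rpow_div_mul_sub_le hγ hp (Real.exp_pos (-Y)).le
  rw [Real.sq_sqrt (by positivity)]
  simp only [powGenObjective, dotProduct_add]
  linarith

theorem bddAbove_image_powGenObjective (hγ : γ ∈ Set.Ioo (0 : ℝ) 1) (hδ : 0 < δ)
    (hb : √(∑ i, b i ^ 2) ≤ C)
    (hσ : (σ * σᵀ - δ • (1 : Matrix (Fin m) (Fin m) ℝ)).PosSemidef)
    (hσC : √(∑ i, ∑ j, σ i j ^ 2) ≤ C) (hΘ : ∀ p ∈ Θ, 0 ≤ p.2) (Y : ℝ) (Z : Fin n → ℝ) :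
    BddAbove (powGenObjective γ b σ Y Z '' Θ) := by
  have hα : 0 < (1 - γ) * δ / 2 := by linarith [mul_pos (sub_pos.2 hγ.2) hδ]
  refine ⟨(C * (1 + √(∑ j, Z j ^ 2))) ^ 2 / (4 * ((1 - γ) * δ / 2))
    + (1 - γ) / γ * Real.exp (-Y) ^ (1 / (1 - γ)), ?_⟩
  rintro _ ⟨p, hp, rfl⟩
  linarith [powGenObjective_le hγ hb hσ hσC (hΘ p hp) Y Z, neg_mul_sq_add_mul_le
    (t := √(∑ i, p.1 i ^ 2)) (N := C * (1 + √(∑ j, Z j ^ 2))) hα]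

noncomputable def powGenRadius (γ δ C Y₀ : ℝ) : ℝ :=
  1 + (C + (1 - γ) / γ * Real.exp (-Y₀) ^ (1 / (1 - γ))) / ((1 - γ) * δ / 2)

theorem one_le_powGenRadius (hγ : γ ∈ Set.Ioo (0 : ℝ) 1) (hδ : 0 < δ) (hC : 0 ≤ C) (Y₀ : ℝ) :
    1 ≤ powGenRadius γ δ C Y₀ := by
  have hγ0 := hγ.1
  have h1γ := sub_pos.2 hγ.2
  exact le_add_of_nonneg_right (by positivity)

theorem sqrt_sum_sq_le_of_powGenObjective_pos (hγ : γ ∈ Set.Ioo (0 : ℝ) 1) (hδ : 0 < δ)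
    (hb : √(∑ i, b i ^ 2) ≤ C)
    (hσ : (σ * σᵀ - δ • (1 : Matrix (Fin m) (Fin m) ℝ)).PosSemidef)
    (hσC : √(∑ i, ∑ j, σ i j ^ 2) ≤ C) {p : (Fin m → ℝ) × ℝ} (hp : 0 ≤ p.2)
    {Y₀ Y : ℝ} (hY : Y₀ ≤ Y) {Z : Fin n → ℝ} (hpos : 0 < powGenObjective γ b σ Y Z p) :
    √(∑ i, p.1 i ^ 2) ≤ powGenRadius γ δ C Y₀ * (1 + √(∑ j, Z j ^ 2)) := by
  obtain ⟨hγ0, hγ1⟩ := hγ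
  have h1γ : 0 < 1 - γ := by linarith
  have hα : 0 < (1 - γ) * δ / 2 := by positivity
  have hC : 0 ≤ C := (Real.sqrt_nonneg _).trans hb
  have hG : (1 - γ) / γ * Real.exp (-Y) ^ (1 / (1 - γ))
      ≤ (1 - γ) / γ * Real.exp (-Y₀) ^ (1 / (1 - γ)) := by
    gcongr
  have hobj := powGenObjective_le ⟨hγ0, hγ1⟩ hb hσ hσC hp Y Z
  set G₀ := (1 - γ) / γ * Real.exp (-Y₀) ^ (1 / (1 - γ))
  set s := 1 + √(∑ j, Z j ^ 2)
  have hs : 1 ≤ s := le_add_of_nonneg_right (Real.sqrt_nonneg _)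
  have hG₀ : 0 ≤ G₀ := by positivity
  have ht := le_one_add_div_of_mul_sq_lt hα (mul_nonneg hC (by positivity : 0 ≤ s)) hG₀
    (t := √(∑ i, p.1 i ^ 2)) (by linarith)
  have hNG : C * s + G₀ ≤ (C + G₀) * s := by nlinarith
  calc √(∑ i, p.1 i ^ 2) ≤ 1 + (C * s + G₀) / ((1 - γ) * δ / 2) := ht
    _ ≤ s + (C + G₀) * s / ((1 - γ) * δ / 2) := by gcongr
    _ = powGenRadius γ δ C Y₀ * s := by unfold powGenRadius; ring

theorem powGen_antitone (hγ : γ ∈ Set.Ioo (0 : ℝ) 1) (hδ : 0 < δ) (hb : √(∑ i, b i ^ 2) ≤ C)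
    (hσ : (σ * σᵀ - δ • (1 : Matrix (Fin m) (Fin m) ℝ)).PosSemidef)
    (hσC : √(∑ i, ∑ j, σ i j ^ 2) ≤ C) (hΘ : ∀ p ∈ Θ, 0 ≤ p.2)
    (h0 : ((0 : Fin m → ℝ), (0 : ℝ)) ∈ Θ) (Z : Fin n → ℝ) :
    Antitone fun Y => powGen m n γ b σ Θ Y Z := by
  intro Y₁ Y₂ hY
  have hbdd := bddAbove_image_powGenObjective hγ hδ hb hσ hσC hΘ Y₁ Z
  have hsup := csSup_image_le_csSup_image_add (f := powGenObjective γ b σ Y₂ Z) (ε := 0)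
    ⟨_, h0⟩ hbdd (by simpa using le_csSup hbdd ⟨_, h0, powGenObjective_zero hγ.1.ne' Y₁ Z⟩)
    fun p hp _ => by simpa using powGenObjective_antitone hγ.1 (hΘ p hp) Z hY
  simp only [powGen_eq]
  exact mul_le_mul_of_nonneg_left (by simpa using hsup) hγ.1.le

theorem sSup_image_powGenObjective_le (hγ : γ ∈ Set.Ioo (0 : ℝ) 1) (hδ : 0 < δ)
    (hb : √(∑ i, b i ^ 2) ≤ C)
    (hσ : (σ * σᵀ - δ • (1 : Matrix (Fin m) (Fin m) ℝ)).PosSemidef)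
    (hσC : √(∑ i, ∑ j, σ i j ^ 2) ≤ C) (hΘ : ∀ p ∈ Θ, 0 ≤ p.2)
    (h0 : ((0 : Fin m → ℝ), (0 : ℝ)) ∈ Θ) {Y₀ Y : ℝ} (hY : Y₀ ≤ Y) (Z Zt : Fin n → ℝ) :
    sSup (powGenObjective γ b σ Y Z '' Θ) ≤ sSup (powGenObjective γ b σ Y Zt '' Θ)
      + C * powGenRadius γ δ C Y₀ * (1 + √(∑ j, Z j ^ 2)) * √(∑ j, (Z j - Zt j) ^ 2) := by
  have hC : 0 ≤ C := (Real.sqrt_nonneg _).trans hb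
  have hbdd := bddAbove_image_powGenObjective hγ hδ hb hσ hσC hΘ Y Zt
  refine csSup_image_le_csSup_image_add ⟨_, h0⟩ hbdd ?_ fun p hp hpos => ?_
  · have := le_csSup hbdd ⟨_, h0, powGenObjective_zero hγ.1.ne' Y Zt⟩
    have := one_le_powGenRadius hγ hδ hC Y₀
    positivity
  · have hπ := sqrt_sum_sq_le_of_powGenObjective_pos hγ hδ hb hσ hσC (hΘ p hp) hY hpos
    have hZ := dotProduct_mulVec_le hσC p.1 (Z - Zt)
    have hsub := powGenObjective_sub (γ := γ) (b := b) (σ := σ) Y Z Zt p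
    simp only [Pi.sub_apply] at hZ
    have := mul_le_mul_of_nonneg_right hπ (mul_nonneg hC (Real.sqrt_nonneg
      (∑ j, (Z j - Zt j) ^ 2)))
    linarith

theorem abs_powGen_sub_le (hγ : γ ∈ Set.Ioo (0 : ℝ) 1) (hδ : 0 < δ) (hb : √(∑ i, b i ^ 2) ≤ C)
    (hσ : (σ * σᵀ - δ • (1 : Matrix (Fin m) (Fin m) ℝ)).PosSemidef)
    (hσC : √(∑ i, ∑ j, σ i j ^ 2) ≤ C) (hΘ : ∀ p ∈ Θ, 0 ≤ p.2)
    (h0 : ((0 : Fin m → ℝ), (0 : ℝ)) ∈ Θ) {Y₀ Y : ℝ} (hY : Y₀ ≤ Y) (Z Zt : Fin n → ℝ) :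
    |powGen m n γ b σ Θ Y Z - powGen m n γ b σ Θ Y Zt|
      ≤ C * powGenRadius γ δ C Y₀ * (1 + √(∑ j, Z j ^ 2) + √(∑ j, Zt j ^ 2))
        * √(∑ j, (Z j - Zt j) ^ 2) := by
  have hC : 0 ≤ C := (Real.sqrt_nonneg _).trans hb
  have hK : 0 ≤ C * powGenRadius γ δ C Y₀ :=
    mul_nonneg hC (zero_le_one.trans (one_le_powGenRadius hγ hδ hC Y₀))
  have hdist : √(∑ j, (Zt j - Z j) ^ 2) = √(∑ j, (Z j - Zt j) ^ 2) := by
    simp only [← neg_sub (Z _), neg_sq]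
  have h₁ := sSup_image_powGenObjective_le hγ hδ hb hσ hσC hΘ h0 hY Z Zt
  have h₂ := sSup_image_powGenObjective_le hγ hδ hb hσ hσC hΘ h0 hY Zt Z
  rw [hdist] at h₂
  have hZ := mul_nonneg (mul_nonneg hK (Real.sqrt_nonneg (∑ j, Z j ^ 2)))
    (Real.sqrt_nonneg (∑ j, (Z j - Zt j) ^ 2))
  have hZt := mul_nonneg (mul_nonneg hK (Real.sqrt_nonneg (∑ j, Zt j ^ 2)))
    (Real.sqrt_nonneg (∑ j, (Z j - Zt j) ^ 2))
  have hsup : |sSup (powGenObjective γ b σ Y Z '' Θ) - sSup (powGenObjective γ b σ Y Zt '' Θ)|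
      ≤ C * powGenRadius γ δ C Y₀ * (1 + √(∑ j, Z j ^ 2) + √(∑ j, Zt j ^ 2))
        * √(∑ j, (Z j - Zt j) ^ 2) := by
    rw [abs_sub_le_iff]
    constructor <;> linarith
  rw [powGen_eq, powGen_eq, ← mul_sub, abs_mul, abs_of_pos hγ.1]
  exact (mul_le_of_le_one_left (abs_nonneg _) hγ.2.le).trans hsup

end PowGen

theorem stmt_18_general (γ : ℝ) (hγ : γ ∈ Set.Ioo (0 : ℝ) 1) (m n : ℕ)
    (δ C a₁ : ℝ) (hδ : 0 < δ) (hC : 0 < C) :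
    (∀ b : Fin m → ℝ, Real.sqrt (∑ i, b i ^ 2) ≤ C →
      ∀ σ : Matrix (Fin m) (Fin n) ℝ,
        (σ * σᵀ - δ • (1 : Matrix (Fin m) (Fin m) ℝ)).PosSemidef →
        Real.sqrt (∑ i, ∑ j, σ i j ^ 2) ≤ C →
      ∀ Θ : Set ((Fin m → ℝ) × ℝ), (∀ p ∈ Θ, 0 ≤ p.2) →
        ((0 : Fin m → ℝ), (0 : ℝ)) ∈ Θ →
      ∀ Z : Fin n → ℝ, Antitone (fun Y => powGen m n γ b σ Θ Y Z))
    ∧ ∃ K : ℝ, 0 < K ∧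
      ∀ b : Fin m → ℝ, Real.sqrt (∑ i, b i ^ 2) ≤ C →
      ∀ σ : Matrix (Fin m) (Fin n) ℝ,
        (σ * σᵀ - δ • (1 : Matrix (Fin m) (Fin m) ℝ)).PosSemidef →
        Real.sqrt (∑ i, ∑ j, σ i j ^ 2) ≤ C →
      ∀ Θ : Set ((Fin m → ℝ) × ℝ), (∀ p ∈ Θ, 0 ≤ p.2) →
        ((0 : Fin m → ℝ), (0 : ℝ)) ∈ Θ →
      ∀ (Y : ℝ) (Z Zt : Fin n → ℝ), Real.log a₁ ≤ Y →
        |powGen m n γ b σ Θ Y Z - powGen m n γ b σ Θ Y Zt|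
          ≤ K * (1 + Real.sqrt (∑ j, Z j ^ 2) + Real.sqrt (∑ j, Zt j ^ 2))
            * Real.sqrt (∑ j, (Z j - Zt j) ^ 2) := by
  refine ⟨fun b hb σ hσ hσC Θ hΘ h0 Z => powGen_antitone hγ hδ hb hσ hσC hΘ h0 Z,
    C * powGenRadius γ δ C (Real.log a₁),
    mul_pos hC (one_pos.trans_le (one_le_powGenRadius hγ hδ hC.le _)),
    fun b hb σ hσ hσC Θ hΘ h0 Y Z Zt hY => abs_powGen_sub_le hγ hδ hb hσ hσC hΘ h0 hY Z Zt⟩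

theorem stmt_18 (γ : ℝ) (hγ : γ ∈ Set.Ioo (0 : ℝ) 1) (m n : ℕ) (hm : 1 ≤ m) (hn : 1 ≤ n)
    (δ C a₁ : ℝ) (hδ : 0 < δ) (hC : 0 < C) (ha₁ : a₁ ∈ Set.Ioc (0 : ℝ) 1) :
    (∀ b : Fin m → ℝ, Real.sqrt (∑ i, b i ^ 2) ≤ C →
      ∀ σ : Matrix (Fin m) (Fin n) ℝ,
        (σ * σᵀ - δ • (1 : Matrix (Fin m) (Fin m) ℝ)).PosSemidef →
        Real.sqrt (∑ i, ∑ j, σ i j ^ 2) ≤ C →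
      ∀ Θ : Set ((Fin m → ℝ) × ℝ), (∀ p ∈ Θ, 0 ≤ p.2) →
        ((0 : Fin m → ℝ), (0 : ℝ)) ∈ Θ →
      ∀ Z : Fin n → ℝ, Antitone (fun Y => powGen m n γ b σ Θ Y Z))
    ∧ ∃ K : ℝ, 0 < K ∧
      ∀ b : Fin m → ℝ, Real.sqrt (∑ i, b i ^ 2) ≤ C →
      ∀ σ : Matrix (Fin m) (Fin n) ℝ,
        (σ * σᵀ - δ • (1 : Matrix (Fin m) (Fin m) ℝ)).PosSemidef →
        Real.sqrt (∑ i, ∑ j, σ i j ^ 2) ≤ C →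
      ∀ Θ : Set ((Fin m → ℝ) × ℝ), (∀ p ∈ Θ, 0 ≤ p.2) →
        ((0 : Fin m → ℝ), (0 : ℝ)) ∈ Θ →
      ∀ (Y : ℝ) (Z Zt : Fin n → ℝ), Real.log a₁ ≤ Y →
        |powGen m n γ b σ Θ Y Z - powGen m n γ b σ Θ Y Zt|
          ≤ K * (1 + Real.sqrt (∑ j, Z j ^ 2) + Real.sqrt (∑ j, Zt j ^ 2))
            * Real.sqrt (∑ j, (Z j - Zt j) ^ 2) :=
  stmt_18_general γ hγ m n δ C a₁ hδ hC
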